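/- Let n, k be positive integers, let A = [[A_II, A_IB],[A_BI, A_BB]] be a real symmetric positive definite (n+k)×(n+k) matrix with A_II of size n×n, and suppose R = [[R_II, R_IB],[0, R_BB]] is a block upper-triangular matrix with R_II invertible such that A = Rᵀ R. Then for every β_z ∈ ℝ^k, the infimum over β_I ∈ ℝ^n of [β_I; β_z]ᵀ A [β_I; β_z] equals ‖R_BB β_z‖², where ‖·‖ is the Euclidean norm on ℝ^k. -/
import Mathlib


open Matrix

lemma euclid_norm_sq_eq_dot (k : ℕ) (u : Fin k → ℝ) :
    ‖(WithLp.equiv 2 (Fin k → ℝ)).symm u‖ ^ 2 = u ⬝ᵥ u := by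
  rw [EuclideanSpace.norm_eq, Real.sq_sqrt (by positivity)]
  simp [dotProduct, sq]

/-- Discrete trace-norm identity: if the symmetric positive definite block matrix
`A = [[A_II, A_IB],[A_BI, A_BB]]` factors as `A = Rᵀ R` with
`R = [[R_II, R_IB],[0, R_BB]]` block upper triangular and `R_II` invertible,
then for every boundary vector `β_z` the infimum over interior vectors `β_I` of
the quadratic form `[β_I; β_z]ᵀ A [β_I; β_z]` equals `‖R_BB β_z‖²` in the
Euclidean norm. -/
theorem inf_quadratic_form_eq_sq_norm_cholesky
    (n k : ℕ) (hn : 0 < n) (hk : 0 < k)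
    (AII : Matrix (Fin n) (Fin n) ℝ) (AIB : Matrix (Fin n) (Fin k) ℝ)
    (ABI : Matrix (Fin k) (Fin n) ℝ) (ABB : Matrix (Fin k) (Fin k) ℝ)
    (RII : Matrix (Fin n) (Fin n) ℝ) (RIB : Matrix (Fin n) (Fin k) ℝ)
    (RBB : Matrix (Fin k) (Fin k) ℝ)
    (hA : (Matrix.fromBlocks AII AIB ABI ABB).PosDef)
    (hRII : IsUnit RII)
    (hfact : Matrix.fromBlocks AII AIB ABI ABB =
      (Matrix.fromBlocks RII RIB 0 RBB)ᵀ * Matrix.fromBlocks RII RIB 0 RBB)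
    (βz : Fin k → ℝ) :
    IsGLB
      {x : ℝ | ∃ βI : Fin n → ℝ,
        x = Sum.elim βI βz ⬝ᵥ (Matrix.fromBlocks AII AIB ABI ABB *ᵥ Sum.elim βI βz)}
      (‖(WithLp.equiv 2 (Fin k → ℝ)).symm (RBB *ᵥ βz)‖ ^ 2) := by
  have key : ∀ βI : Fin n → ℝ,
      Sum.elim βI βz ⬝ᵥ (Matrix.fromBlocks AII AIB ABI ABB *ᵥ Sum.elim βI βz)
        = (RII *ᵥ βI + RIB *ᵥ βz) ⬝ᵥ (RII *ᵥ βI + RIB *ᵥ βz)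
          + (RBB *ᵥ βz) ⬝ᵥ (RBB *ᵥ βz) := by
    intro βI
    rw [hfact, ← Matrix.mulVec_mulVec, Matrix.dotProduct_mulVec,
      Matrix.vecMul_transpose, Matrix.fromBlocks_mulVec]
    simp [sumElim_dotProduct_sumElim]
  rw [euclid_norm_sq_eq_dot]
  constructor
  · rintro x ⟨βI, rfl⟩
    rw [key]
    have : (0:ℝ) ≤ (RII *ᵥ βI + RIB *ᵥ βz) ⬝ᵥ (RII *ᵥ βI + RIB *ᵥ βz) := by
      apply Finset.sum_nonneg
      intro i _
      exact mul_self_nonneg _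
    linarith
  · intro b hb
    have hdet : IsUnit RII.det := (Matrix.isUnit_iff_isUnit_det RII).mp hRII
    refine hb ⟨-(RII⁻¹ *ᵥ (RIB *ᵥ βz)), ?_⟩
    rw [key]
    have : RII *ᵥ -(RII⁻¹ *ᵥ (RIB *ᵥ βz)) + RIB *ᵥ βz = 0 := by
      rw [Matrix.mulVec_neg, Matrix.mulVec_mulVec, Matrix.mul_nonsing_inv _ hdet,
        Matrix.one_mulVec]
      simp
    rw [this]
    simp
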